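/- arXiv:2212.13615 — 7 statements merged into one kernel-verified Lean document; each statement's English description precedes it below -/
import Mathlib

section
/- Let 0 = c₀ < c₁ < ⋯ < c_N < c_{N+1} = h be integer cache locations and let 3 ≤ i ≤ N−1 with c_{i−1}+1 < c_i and c_i+1 < c_{i+1}. If TC(Δ_i c) < TC(c) and TC(Δ_{i−1} c) < TC(c), then TC(Δ_{i−1} Δ_i c) < TC(Δ_{i−1} c). -/
/-- Region cost `C(a₁,a₂,b) = b·(a₂−a₁)·(a₂−a₁+b−2)/2` as a rational number. -/
noncomputable def regionCost (a₁ a₂ b : ℤ) : ℚ :=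
  (b : ℚ) * ((a₂ : ℚ) - (a₁ : ℚ)) * ((a₂ : ℚ) - (a₁ : ℚ) + (b : ℚ) - 2) / 2

/-- Total cache-placement cost `totalCost(c) = ∑_{j=1}^{N} C(c_{j−1}, c_{j+1}, c_j)`. -/
noncomputable def totalCost (N : ℕ) (c : ℕ → ℤ) : ℚ :=
  ∑ j ∈ Finset.Icc 1 N, regionCost (c (j - 1)) (c (j + 1)) (c j)

/-- `Δ i c` replaces `c i` by `c i + 1`. -/
noncomputable def Δ (i : ℕ) (c : ℕ → ℤ) : ℕ → ℤ := Function.update c i (c i + 1)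

lemma delta_ne (c : ℕ → ℤ) (i k : ℕ) (h : k ≠ i) : Δ i c k = c k :=
  Function.update_of_ne h _ _

lemma delta_eq (c : ℕ → ℤ) (i : ℕ) : Δ i c i = c i + 1 :=
  Function.update_self _ _ _

set_option maxHeartbeats 1000000 in
/-- The explicit change in total cost when `c i` is bumped to `c i + 1`:
only the three summands `j = i-1, i, i+1` change. -/
lemma tc_diff (N i : ℕ) (c : ℕ → ℤ) (hi : 2 ≤ i) (hiN : i + 1 ≤ N) :
    totalCost N (Δ i c) - totalCost N c =
      ((c (i-1) : ℚ) * (2*((c i : ℚ) - (c (i-2) : ℚ)) + (c (i-1):ℚ) - 1)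
      + ((c (i+1):ℚ) - (c (i-1):ℚ)) * (((c (i+1):ℚ) - (c (i-1):ℚ)) + 2*(c i:ℚ) - 1)
      - (c (i+1):ℚ) * (2*((c (i+2):ℚ) - (c i:ℚ)) + (c (i+1):ℚ) - 3)) / 2 := by
  unfold totalCost
  rw [← Finset.sum_sub_distrib]
  have hsub : ({i-1, i, i+1} : Finset ℕ) ⊆ Finset.Icc 1 N := by
    intro j hj
    simp only [Finset.mem_insert, Finset.mem_singleton] at hj
    rw [Finset.mem_Icc]
    omega
  rw [← Finset.sum_subset hsub]
  · have h1 : (i-1) ∉ ({i, i+1} : Finset ℕ) := by simp; omega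
    have h2 : i ∉ ({i+1} : Finset ℕ) := by simp
    rw [Finset.sum_insert h1, Finset.sum_insert h2, Finset.sum_singleton]
    have e1 : i - 1 - 1 = i - 2 := by omega
    have e2 : i - 1 + 1 = i := by omega
    rw [e1, e2]
    simp only [Nat.add_sub_cancel]
    rw [delta_ne c i (i-2) (by omega), delta_ne c i (i-1) (by omega), delta_eq,
        delta_ne c i (i+1) (by omega), delta_ne c i (i+2) (by omega)]
    unfold regionCost
    push_cast
    ring
  · intro j hj hj'
    simp only [Finset.mem_insert, Finset.mem_singleton] at hj'
    rw [Finset.mem_Icc] at hj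
    push_neg at hj'
    rw [delta_ne c i (j-1) (by omega), delta_ne c i (j+1) (by omega),
        delta_ne c i j (by omega)]
    ring

set_option maxHeartbeats 1000000 in
theorem stmt_0 (N : ℕ) (h : ℤ) (c : ℕ → ℤ) (i : ℕ)
    (hh : 0 < h) (hc0 : c 0 = 0) (hcN : c (N + 1) = h)
    (hmono : ∀ j, j ≤ N → c j < c (j + 1))
    (hi1 : 3 ≤ i) (hi2 : i + 1 ≤ N)
    (hgap1 : c (i - 1) + 1 < c i) (hgap2 : c i + 1 < c (i + 1))
    (h1 : totalCost N (Δ i c) < totalCost N c)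
    (h2 : totalCost N (Δ (i - 1) c) < totalCost N c) :
    totalCost N (Δ (i - 1) (Δ i c)) < totalCost N (Δ (i - 1) c) := by
  -- variables
  set p := c (i-3) with hp
  set q := c (i-2) with hq
  set r := c (i-1) with hr
  set s := c i with hs
  set t := c (i+1) with ht
  set u := c (i+2) with hu
  -- order facts
  have hnonneg : ∀ j, j ≤ N + 1 → 0 ≤ c j := by
    intro j hj
    induction j with
    | zero => simp [hc0]
    | succ k ih =>
      have h1 := hmono k (by omega)
      have h2 := ih (by omega)
      omega
  have hp0 : 0 ≤ p := hnonneg (i-3) (by omega)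
  have hpq : p < q := by
    have := hmono (i-3) (by omega)
    have e : i - 3 + 1 = i - 2 := by omega
    rw [e] at this; exact this
  have hqr : q < r := by
    have := hmono (i-2) (by omega)
    have e : i - 2 + 1 = i - 1 := by omega
    rw [e] at this; exact this
  have hrs : r + 1 < s := hgap1
  have hst : s + 1 < t := hgap2
  have htu : t < u := hmono (i+1) (by omega)
  -- rewrite Δ (i-1) (Δ i c) as Δ i (Δ (i-1) c)
  have hcomm : Δ (i-1) (Δ i c) = Δ i (Δ (i-1) c) := by
    unfold Δ
    rw [Function.update_of_ne (by omega : (i:ℕ) ≠ i - 1),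
        Function.update_of_ne (by omega : (i-1:ℕ) ≠ i)]
    exact Function.update_comm (by omega) _ _ c
  rw [hcomm]
  -- three applications of tc_diff
  have key1 := tc_diff N i c (by omega) hi2
  have key2 := tc_diff N (i-1) c (by omega) (by omega)
  have key3 := tc_diff N i (Δ (i-1) c) (by omega) hi2
  -- simplify key2 indices
  have e1 : i - 1 - 1 = i - 2 := by omega
  have e2 : i - 1 - 2 = i - 3 := by omega
  have e3 : i - 1 + 1 = i := by omega
  have e4 : i - 1 + 2 = i + 1 := by omega
  rw [e1, e2, e3, e4] at key2
  -- simplify key3 evaluations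
  rw [delta_ne c (i-1) (i-2) (by omega), delta_ne c (i-1) i (by omega),
      delta_ne c (i-1) (i+1) (by omega), delta_ne c (i-1) (i+2) (by omega),
      delta_eq c (i-1)] at key3
  rw [← hq, ← hr, ← hs, ← ht, ← hu] at key1 key3
  rw [← hp, ← hq, ← hr, ← hs, ← ht] at key2
  -- cast order facts to ℚ
  have hp0' : (0:ℚ) ≤ (p:ℚ) := by exact_mod_cast hp0
  have hpq' : (p:ℚ) < q := by exact_mod_cast hpq
  have hqr' : (q:ℚ) < r := by exact_mod_cast hqr
  have hrs' : (r:ℚ) + 1 < s := by exact_mod_cast hrs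
  have hst' : (s:ℚ) + 1 < t := by exact_mod_cast hst
  have htu' : (t:ℚ) < u := by exact_mod_cast htu
  have h1' : totalCost N (Δ i c) - totalCost N c < 0 := by linarith
  have h2' : totalCost N (Δ (i-1) c) - totalCost N c < 0 := by linarith
  rw [key1] at h1'
  rw [key2] at h2'
  have hX : 2*(r:ℚ) - q - t + 1 < 0 := by
    by_contra hX
    push_neg at hX
    nlinarith [mul_nonneg (by linarith : (0:ℚ) ≤ (q:ℚ)) (by linarith : (0:ℚ) ≤ (q:ℚ) - p),
               mul_nonneg (by linarith : (0:ℚ) ≤ (s:ℚ)) hX]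
  have goal' : totalCost N (Δ i (Δ (i-1) c)) - totalCost N (Δ (i-1) c) < 0 := by
    rw [key3]
    push_cast
    linarith [h1', hX]
  linarith
end

section
/- Let 0 = c₀ < c₁ < ⋯ < c_N < c_{N+1} = h be integer cache locations, let 3 ≤ i ≤ N−1, let k ≥ 1 be an integer with c_i + k < c_{i+1}, and suppose c_{i−1}+1 < c_i. If TC(Δ_i^k c) < TC(Δ_i^{k−1} c) and TC(Δ_{i−1} Δ_i^{k−1} c) < TC(Δ_i^{k−1} c), then TC(Δ_{i−1} Δ_i^k c) < TC(Δ_{i−1} Δ_i^{k−1} c), where Δ_i^k denotes applying Δ_i k times (i.e., replacing c_i by c_i+k). -/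
lemma iterΔ (i : ℕ) (c : ℕ → ℤ) : ∀ k : ℕ, (Δ i)^[k] c = Function.update c i (c i + k)
  | 0 => by simp
  | (k+1) => by
      rw [Function.iterate_succ_apply', iterΔ i c k]
      funext j
      by_cases hj : j = i <;> simp [Δ, Function.update_apply, hj] <;> ring

lemma totalCost_sub (N i : ℕ) (hi1 : 3 ≤ i) (hi2 : i + 1 ≤ N) (c₁ c₂ : ℕ → ℤ)
    (hagree : ∀ j, j ≠ i - 1 → j ≠ i → c₁ j = c₂ j) :
    totalCost N c₁ - totalCost N c₂ =
      ∑ j ∈ Finset.Icc (i-2) (i+1),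
        (regionCost (c₁ (j-1)) (c₁ (j+1)) (c₁ j) - regionCost (c₂ (j-1)) (c₂ (j+1)) (c₂ j)) := by
  unfold totalCost
  rw [← Finset.sum_sub_distrib]
  refine (Finset.sum_subset ?_ ?_).symm
  · intro j hj
    simp only [Finset.mem_Icc] at *
    omega
  · intro j hj hj2
    simp only [Finset.mem_Icc] at hj hj2
    rw [hagree (j-1) (by omega) (by omega), hagree (j+1) (by omega) (by omega),
        hagree j (by omega) (by omega), sub_self]

lemma sum_Icc4 (m : ℕ) (f : ℕ → ℚ) :
    ∑ j ∈ Finset.Icc (m+1) (m+4), f j = f (m+1) + f (m+2) + f (m+3) + f (m+4) := by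
  rw [show m+4 = (m+3)+1 by omega, Finset.sum_Icc_succ_top (by omega),
      show m+3 = (m+2)+1 by omega, Finset.sum_Icc_succ_top (by omega),
      show m+2 = (m+1)+1 by omega, Finset.sum_Icc_succ_top (by omega),
      Finset.Icc_self, Finset.sum_singleton]

lemma key_ineq (p a x Y z w : ℚ) (h0 : 0 ≤ p) (h1 : p + 1 ≤ a) (h2 : a + 1 ≤ x)
    (h3 : x + 2 ≤ Y) (h4 : Y + 2 ≤ z) (h5 : z + 1 ≤ w)
    (hD1 : x*(2*(Y-a)+x-1) + (z-x)*(z-x+2*Y-1) - z*(2*(w-Y)+z-3) < 0)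
    (hD2 : a*(2*(x-p)+a-1) + (Y-a)*(Y-a+2*x-1) - Y*(2*(z-x)+Y-3) < 0) :
    x*(2*(Y-a)+x-1) + (z-x)*(z-x+2*Y-1) - z*(2*(w-Y)+z-3) + 2*(2*x-a-z+1) < 0 := by
  nlinarith [mul_pos (by linarith : (0:ℚ) < x - a) (by linarith : (0:ℚ) < a - p),
    sq_nonneg (x-a), sq_nonneg (z-Y), sq_nonneg (Y-x),
    mul_nonneg (by linarith : (0:ℚ) ≤ Y - x) (by linarith : (0:ℚ) ≤ z - Y)]

theorem stmt_2 (N : ℕ) (h : ℤ) (c : ℕ → ℤ) (i k : ℕ)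
    (hh : 0 < h) (hc0 : c 0 = 0) (hcN : c (N + 1) = h)
    (hmono : ∀ j, j ≤ N → c j < c (j + 1))
    (hi1 : 3 ≤ i) (hi2 : i + 1 ≤ N)
    (hk : 1 ≤ k) (hgapk : c i + (k : ℤ) < c (i + 1))
    (hgap1 : c (i - 1) + 1 < c i)
    (h1 : totalCost N ((Δ i)^[k] c) < totalCost N ((Δ i)^[k - 1] c))
    (h2 : totalCost N (Δ (i - 1) ((Δ i)^[k - 1] c)) < totalCost N ((Δ i)^[k - 1] c)) :
    totalCost N (Δ (i - 1) ((Δ i)^[k] c)) < totalCost N (Δ (i - 1) ((Δ i)^[k - 1] c)) := by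
  obtain ⟨m, rfl⟩ : ∃ m, i = m + 3 := ⟨i - 3, by omega⟩
  obtain ⟨k', rfl⟩ : ∃ k', k = k' + 1 := ⟨k - 1, by omega⟩
  rw [show m + 3 - 1 = m + 2 by omega] at hgap1 h2 ⊢
  rw [show k' + 1 - 1 = k' by omega] at h1 h2 ⊢
  simp only [iterΔ, Δ] at h1 h2 ⊢
  -- name the four configurations
  set CB : ℕ → ℤ := Function.update c (m+3) (c (m+3) + (k' : ℤ)) with hCB
  set CA : ℕ → ℤ := Function.update c (m+3) (c (m+3) + ((k' : ℤ) + 1)) with hCA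
  have hcast : c (m+3) + ((k'+1 : ℕ) : ℤ) = c (m+3) + ((k' : ℤ) + 1) := by push_cast; ring
  rw [hcast] at h1 ⊢
  set DB : ℕ → ℤ := Function.update CB (m+2) (CB (m+2) + 1) with hDB
  set DA : ℕ → ℤ := Function.update CA (m+2) (CA (m+2) + 1) with hDA
  -- agreements outside {m+2, m+3}
  have agr1 : ∀ j, j ≠ (m+3) - 1 → j ≠ m+3 → CA j = CB j := by
    intro j _ hj2
    simp [hCA, hCB, Function.update_apply, hj2]
  have agr2 : ∀ j, j ≠ (m+3) - 1 → j ≠ m+3 → DB j = CB j := by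
    intro j hj1 hj2
    have hj1' : j ≠ m+2 := by omega
    simp [hDB, hCB, Function.update_apply, hj1', hj2]
  have agr3 : ∀ j, j ≠ (m+3) - 1 → j ≠ m+3 → DA j = DB j := by
    intro j hj1 hj2
    have hj1' : j ≠ m+2 := by omega
    simp [hDA, hDB, hCA, hCB, Function.update_apply, hj1', hj2]
  have E1 := totalCost_sub N (m+3) (by omega) (by omega) CA CB agr1
  have E2 := totalCost_sub N (m+3) (by omega) (by omega) DB CB agr2
  have E3 := totalCost_sub N (m+3) (by omega) (by omega) DA DB agr3
  rw [show m + 3 - 2 = m + 1 by omega] at E1 E2 E3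
  have S1 : (∑ j ∈ Finset.Icc (m+1) (m+3+1),
      (regionCost (CA (j-1)) (CA (j+1)) (CA j) - regionCost (CB (j-1)) (CB (j+1)) (CB j))) < 0 := by
    rw [← E1]; linarith
  have S2 : (∑ j ∈ Finset.Icc (m+1) (m+3+1),
      (regionCost (DB (j-1)) (DB (j+1)) (DB j) - regionCost (CB (j-1)) (CB (j+1)) (CB j))) < 0 := by
    rw [← E2]; linarith
  suffices S3 : (∑ j ∈ Finset.Icc (m+1) (m+3+1),
      (regionCost (DA (j-1)) (DA (j+1)) (DA j) - regionCost (DB (j-1)) (DB (j+1)) (DB j))) < 0 by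
    rw [← E3] at S3; linarith
  rw [show m+3+1 = m+4 by omega] at S1 S2 ⊢
  rw [sum_Icc4] at S1 S2 ⊢
  -- evaluate all the updated function values
  simp only [hDA, hDB, hCA, hCB, Function.update_apply, regionCost,
    Nat.add_sub_cancel, show m+2-1 = m+1 by omega, show m+3-1 = m+2 by omega,
    show m+4-1 = m+3 by omega] at S1 S2 ⊢
  norm_num at S1 S2 ⊢
  -- nonnegativity of c m
  have h0m : (0:ℤ) ≤ c m := by
    have key : ∀ j, j ≤ N + 1 → 0 ≤ c j := by
      intro j
      induction j with
      | zero => simp [hc0]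
      | succ n ih =>
        intro hn
        have := hmono n (by omega)
        have := ih (by omega)
        omega
    exact key m (by omega)
  -- integer ordering facts
  have q1 : c m < c (m+1) := hmono m (by omega)
  have q2 : c (m+1) < c (m+2) := hmono (m+1) (by omega)
  have q4 : c (m+3) + ((k':ℤ)+1) < c (m+4) := by push_cast at hgapk; linarith
  have q5 : c (m+4) < c (m+5) := hmono (m+4) (by omega)
  have qk : (0:ℤ) ≤ (k' : ℤ) := by positivity
  -- move to ℚ and conclude via the key inequality
  have K := key_ineq (c m : ℚ) (c (m+1) : ℚ) (c (m+2) : ℚ) ((c (m+3) : ℚ) + (k' : ℚ))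
      (c (m+4) : ℚ) (c (m+5) : ℚ)
      (by exact_mod_cast h0m)
      (by exact_mod_cast q1)
      (by exact_mod_cast q2)
      (by have : c (m+2) + 2 ≤ c (m+3) + (k':ℤ) := by omega
          exact_mod_cast this)
      (by have : c (m+3) + (k':ℤ) + 2 ≤ c (m+4) := by omega
          exact_mod_cast this)
      (by exact_mod_cast q5)
      (by push_cast at S1 ⊢; linarith)
      (by push_cast at S2 ⊢; linarith)
  push_cast at K ⊢
  linarith
end

section
/- Let 0 = c₀ < c₁ < ⋯ < c_N < c_{N+1} = h be integer cache locations and let 2 ≤ i ≤ N−1 with c_{i−1}+1 < c_i and c_i+1 < c_{i+1}. Then TC(Δ_{i−1} c) − TC(Δ_{i−1} Δ_i c) > 0 if and only if 2·c_{i−1} − c_{i−2} + 1 < c_{i−1}·(c_{i+1} + c_{i−2} − c_{i−1}) + c_{i+1}·(c_{i+2} − 2·c_i). -/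
theorem stmt_4 (N : ℕ) (h : ℤ) (c : ℕ → ℤ) (i : ℕ)
    (hh : 0 < h) (hc0 : c 0 = 0) (hcN : c (N + 1) = h)
    (hmono : ∀ j, j ≤ N → c j < c (j + 1))
    (hi1 : 2 ≤ i) (hi2 : i + 1 ≤ N)
    (hgap1 : c (i - 1) + 1 < c i) (hgap2 : c i + 1 < c (i + 1)) :
    0 < totalCost N (Δ (i - 1) c) - totalCost N (Δ (i - 1) (Δ i c)) ↔
      2 * c (i - 1) - c (i - 2) + 1 <
        c (i - 1) * (c (i + 1) + c (i - 2) - c (i - 1)) +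
          c (i + 1) * (c (i + 2) - 2 * c i) := by
  obtain ⟨k, rfl⟩ : ∃ k, i = k + 2 := ⟨i - 2, by omega⟩
  simp only [show k + 2 - 1 = k + 1 from by omega, show k + 2 - 2 = k from by omega]
  set f := Δ (k + 1) c with hf
  set g := Δ (k + 1) (Δ (k + 2) c) with hg
  have hfg : ∀ x, x ≠ k + 2 → f x = g x := by
    intro x hx
    simp only [hf, hg, Δ, Function.update_apply]
    have h1 : ¬ (k + 1 = k + 2) := by omega
    split_ifs with h2 <;> simp_all
  have hfv : ∀ x, f x = if x = k + 1 then c (k + 1) + 1 else c x := by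
    intro x; simp [hf, Δ, Function.update_apply]
  have hgv : ∀ x, g x = if x = k + 1 then c (k + 1) + 1
      else if x = k + 2 then c (k + 2) + 1 else c x := by
    intro x
    simp only [hg, Δ, Function.update_apply]
    split_ifs with h1 h2 <;> simp_all <;> omega
  have key : totalCost N f - totalCost N g
      = ∑ j ∈ ({k + 1, k + 2, k + 3} : Finset ℕ),
          (regionCost (f (j - 1)) (f (j + 1)) (f j)
            - regionCost (g (j - 1)) (g (j + 1)) (g j)) := by
    rw [totalCost, totalCost, ← Finset.sum_sub_distrib]
    refine (Finset.sum_subset ?_ ?_).symm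
    · intro j hj
      simp only [Finset.mem_insert, Finset.mem_singleton] at hj
      simp only [Finset.mem_Icc]; omega
    · intro j hj hj'
      simp only [Finset.mem_Icc] at hj
      simp only [Finset.mem_insert, Finset.mem_singleton, not_or] at hj'
      rw [hfg (j - 1) (by omega), hfg j (by omega), hfg (j + 1) (by omega), sub_self]
  rw [key]
  have hsum : ∀ F : ℕ → ℚ, ∑ j ∈ ({k + 1, k + 2, k + 3} : Finset ℕ), F j
      = F (k + 1) + F (k + 2) + F (k + 3) := by
    intro F
    rw [Finset.sum_insert (by simp), Finset.sum_insert (by simp), Finset.sum_singleton]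
    ring
  rw [hsum]
  simp only [show k + 1 - 1 = k from rfl, show k + 2 - 1 = k + 1 from rfl,
    show k + 3 - 1 = k + 2 from rfl, show k + 1 + 1 = k + 2 from rfl,
    show k + 2 + 1 = k + 3 from rfl, show k + 3 + 1 = k + 4 from rfl]
  simp only [hfv, hgv]
  simp only [if_pos rfl, if_neg (show k ≠ k + 1 by omega),
    if_neg (show k + 2 ≠ k + 1 by omega), if_neg (show k + 3 ≠ k + 1 by omega),
    if_neg (show k + 4 ≠ k + 1 by omega), if_neg (show k ≠ k + 2 by omega),
    if_pos (show k + 2 = k + 2 from rfl), if_neg (show k + 3 ≠ k + 2 by omega),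
    if_neg (show k + 4 ≠ k + 2 by omega), eq_self_iff_true, if_true]
  have hcast : regionCost (c k) (c (k + 2)) (c (k + 1) + 1)
        - regionCost (c k) (c (k + 2) + 1) (c (k + 1) + 1)
      + (regionCost (c (k + 1) + 1) (c (k + 3)) (c (k + 2))
        - regionCost (c (k + 1) + 1) (c (k + 3)) (c (k + 2) + 1))
      + (regionCost (c (k + 2)) (c (k + 4)) (c (k + 3))
        - regionCost (c (k + 2) + 1) (c (k + 4)) (c (k + 3)))
      = ((c (k + 1) * (c (k + 3) + c k - c (k + 1)) + c (k + 3) * (c (k + 4) - 2 * c (k + 2))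
          - (2 * c (k + 1) - c k + 1) : ℤ) : ℚ) := by
    simp only [regionCost]
    push_cast
    ring
  rw [hcast, Int.cast_pos]
  omega
end

section
/- Let 0 = c₀ < c₁ < ⋯ < c_N < c_{N+1} = h be integer cache locations and let 2 ≤ i ≤ N−1 with c_i+1 < c_{i+1}. Then TC(Δ_i c) < TC(c) if and only if c_{i+1} < c_{i−1}·(c_{i+1} + c_{i−2} − c_{i−1}) + c_{i+1}·(c_{i+2} − 2·c_i). -/
theorem stmt_5 (N : ℕ) (h : ℤ) (c : ℕ → ℤ) (i : ℕ)
    (hh : 0 < h) (hc0 : c 0 = 0) (hcN : c (N + 1) = h)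
    (hmono : ∀ j, j ≤ N → c j < c (j + 1))
    (hi1 : 2 ≤ i) (hi2 : i + 1 ≤ N)
    (hgap2 : c i + 1 < c (i + 1)) :
    totalCost N (Δ i c) < totalCost N c ↔
      c (i + 1) <
        c (i - 1) * (c (i + 1) + c (i - 2) - c (i - 1)) +
          c (i + 1) * (c (i + 2) - 2 * c i) := by
  set a := c (i - 2) with ha
  set p := c (i - 1) with hp
  set q := c i with hq
  set r := c (i + 1) with hr
  set s := c (i + 2) with hs
  have hsub : ({i - 1, i, i + 1} : Finset ℕ) ⊆ Finset.Icc 1 N := by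
    intro j hj
    simp only [Finset.mem_insert, Finset.mem_singleton] at hj
    simp only [Finset.mem_Icc]
    omega
  have key : totalCost N (Δ i c) - totalCost N c
      = ((p * p + 2 * q * r + r - a * p - p * r - r * s : ℤ) : ℚ) := by
    rw [totalCost, totalCost, ← Finset.sum_sub_distrib]
    rw [← Finset.sum_subset hsub (by
      intro j hj hj'
      simp only [Finset.mem_insert, Finset.mem_singleton] at hj'
      simp only [Finset.mem_Icc] at hj
      have h1 : j - 1 ≠ i := by omega
      have h2 : j ≠ i := by omega
      have h3 : j + 1 ≠ i := by omega
      simp [Δ, Function.update_of_ne, h1, h2, h3])]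
    have e1 : i - 1 ∉ ({i, i + 1} : Finset ℕ) := by simp; omega
    have e2 : i ∉ ({i + 1} : Finset ℕ) := by simp
    rw [Finset.sum_insert e1, Finset.sum_insert e2, Finset.sum_singleton]
    have h11 : i - 1 - 1 = i - 2 := by omega
    have h12 : i - 1 + 1 = i := by omega
    have h1 : i - 1 - 1 ≠ i := by omega
    have h2 : i - 1 ≠ i := by omega
    have h3 : i + 1 ≠ i := by omega
    have h4 : i + 1 - 1 = i := by omega
    have h5 : i + 1 + 1 = i + 2 := by omega
    have h6 : i + 2 ≠ i := by omega
    have v1 : Δ i c (i - 1 - 1) = a := by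
      rw [Δ, Function.update_of_ne h1, h11]
    have v2 : Δ i c (i - 1 + 1) = q + 1 := by
      rw [h12, Δ, Function.update_self]
    have v3 : Δ i c (i - 1) = p := by rw [Δ, Function.update_of_ne h2]
    have v4 : Δ i c (i + 1) = r := by rw [Δ, Function.update_of_ne h3]
    have v5 : Δ i c i = q + 1 := by rw [Δ, Function.update_self]
    have v6 : Δ i c (i + 1 - 1) = q + 1 := by rw [h4, Δ, Function.update_self]
    have v7 : Δ i c (i + 1 + 1) = s := by
      rw [h5, Δ, Function.update_of_ne h6]
    rw [v1, v2, v3, v4, v5, v6, v7, h11, h12, h4, h5]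
    rw [regionCost, regionCost, regionCost, regionCost, regionCost, regionCost]
    push_cast
    ring
  constructor
  · intro hlt
    have : totalCost N (Δ i c) - totalCost N c < 0 := by linarith
    rw [key] at this
    have hz : (p * p + 2 * q * r + r - a * p - p * r - r * s : ℤ) < 0 := by
      exact_mod_cast this
    nlinarith [hz]
  · intro hlt
    have hz : (p * p + 2 * q * r + r - a * p - p * r - r * s : ℤ) < 0 := by nlinarith [hlt]
    have : totalCost N (Δ i c) - totalCost N c < 0 := by
      rw [key]; exact_mod_cast hz
    linarith
end

section
/- Let 0 = c₀ < c₁ < ⋯ < c_N < c_{N+1} = h be integer cache locations and let 3 ≤ i ≤ N−1 with c_{i−1}+1 < c_i. If TC(Δ_{i−1} c) < TC(c), then c_i·c_{i+1} > c_i·(2·c_{i−1} − c_{i−2} + 1) + c_{i−2}·(c_{i−2} − c_{i−3}). -/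
theorem stmt_6 (N : ℕ) (h : ℤ) (c : ℕ → ℤ) (i : ℕ)
    (hh : 0 < h) (hc0 : c 0 = 0) (hcN : c (N + 1) = h)
    (hmono : ∀ j, j ≤ N → c j < c (j + 1))
    (hi1 : 3 ≤ i) (hi2 : i + 1 ≤ N)
    (hgap1 : c (i - 1) + 1 < c i)
    (h2 : totalCost N (Δ (i - 1) c) < totalCost N c) :
    c i * c (i + 1) >
      c i * (2 * c (i - 1) - c (i - 2) + 1) + c (i - 2) * (c (i - 2) - c (i - 3)) := by
  obtain ⟨m, rfl⟩ : ∃ m, i = m + 3 := ⟨i - 3, by omega⟩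
  rw [show m + 3 - 1 = m + 2 from by omega] at h2 hgap1
  set d : ℕ → ℚ := fun j =>
    regionCost (c (j - 1)) (c (j + 1)) (c j) -
      regionCost (Δ (m + 2) c (j - 1)) (Δ (m + 2) c (j + 1)) (Δ (m + 2) c j) with hd
  have hdiff : totalCost N c - totalCost N (Δ (m + 2) c) = ∑ j ∈ Finset.Icc 1 N, d j := by
    simp [totalCost, Finset.sum_sub_distrib, hd]
  have hsub : ({m + 1, m + 2, m + 3} : Finset ℕ) ⊆ Finset.Icc 1 N := by
    intro j hj; simp at hj ⊢; omega
  have hzero : ∀ j ∈ Finset.Icc 1 N, j ∉ ({m + 1, m + 2, m + 3} : Finset ℕ) → d j = 0 := by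
    intro j hj hj2
    simp only [Finset.mem_Icc] at hj
    simp only [Finset.mem_insert, Finset.mem_singleton, not_or] at hj2
    have e1 : Δ (m + 2) c (j - 1) = c (j - 1) := Function.update_of_ne (by omega) _ _
    have e2 : Δ (m + 2) c (j + 1) = c (j + 1) := Function.update_of_ne (by omega) _ _
    have e3 : Δ (m + 2) c j = c j := Function.update_of_ne (by omega) _ _
    simp [hd, e1, e2, e3]
  have hsum : ∑ j ∈ Finset.Icc 1 N, d j = d (m + 1) + d (m + 2) + d (m + 3) := by
    rw [← Finset.sum_subset hsub hzero]
    rw [Finset.sum_insert (by simp), Finset.sum_insert (by simp), Finset.sum_singleton]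
    ring
  have u1 : Δ (m + 2) c m = c m := Function.update_of_ne (by omega) _ _
  have u2 : Δ (m + 2) c (m + 1) = c (m + 1) := Function.update_of_ne (by omega) _ _
  have u3 : Δ (m + 2) c (m + 2) = c (m + 2) + 1 := Function.update_self _ _ _
  have u4 : Δ (m + 2) c (m + 3) = c (m + 3) := Function.update_of_ne (by omega) _ _
  have u5 : Δ (m + 2) c (m + 4) = c (m + 4) := Function.update_of_ne (by omega) _ _
  have key : totalCost N c - totalCost N (Δ (m + 2) c) =
      ((c m * c (m + 1) - c (m + 1) ^ 2 + c (m + 3) * c (m + 1) - 2 * c (m + 2) * c (m + 3)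
        - c (m + 3) + c (m + 3) * c (m + 4) : ℤ) : ℚ) := by
    rw [hdiff, hsum]
    have i1 : m + 1 - 1 = m := by omega
    have i2 : m + 2 - 1 = m + 1 := by omega
    have i3 : m + 3 - 1 = m + 2 := by omega
    simp only [hd, i1, i2, i3, u1, u2, u3, u4, u5]
    have : m + 1 + 1 = m + 2 := by omega
    rw [this]
    have : m + 2 + 1 = m + 3 := by omega
    rw [this]
    have : m + 3 + 1 = m + 4 := by omega
    rw [this]
    simp only [regionCost]
    push_cast
    ring
  have hpos : (0 : ℚ) <
      ((c m * c (m + 1) - c (m + 1) ^ 2 + c (m + 3) * c (m + 1) - 2 * c (m + 2) * c (m + 3)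
        - c (m + 3) + c (m + 3) * c (m + 4) : ℤ) : ℚ) := by
    rw [← key]; linarith
  have hposZ : (0 : ℤ) <
      c m * c (m + 1) - c (m + 1) ^ 2 + c (m + 3) * c (m + 1) - 2 * c (m + 2) * c (m + 3)
        - c (m + 3) + c (m + 3) * c (m + 4) := by exact_mod_cast hpos
  have j1 : m + 3 - 1 = m + 2 := by omega
  have j2 : m + 3 - 2 = m + 1 := by omega
  have j3 : m + 3 - 3 = m := by omega
  rw [j1, j2, j3]
  nlinarith [hposZ]
end

section
/- Let 0 = c₀ < c₁ < ⋯ < c_N < c_{N+1} = h be integer cache locations and let 3 ≤ i ≤ N−1 with c_{i−1}+1 < c_i. If TC(Δ_{i−1} c) < TC(c), then c_{i+1} > 2·c_{i−1} − c_{i−2} + 1. -/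
theorem stmt_7 (N : ℕ) (h : ℤ) (c : ℕ → ℤ) (i : ℕ)
    (hh : 0 < h) (hc0 : c 0 = 0) (hcN : c (N + 1) = h)
    (hmono : ∀ j, j ≤ N → c j < c (j + 1))
    (hi1 : 3 ≤ i) (hi2 : i + 1 ≤ N)
    (hgap1 : c (i - 1) + 1 < c i)
    (h2 : totalCost N (Δ (i - 1) c) < totalCost N c) :
    c (i + 1) > 2 * c (i - 1) - c (i - 2) + 1 := by
  obtain ⟨k, rfl⟩ : ∃ k, i = k + 3 := ⟨i - 3, by omega⟩
  have hN : k + 4 ≤ N := by omega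
  set c' := Δ (k + 3 - 1) c with hc'
  have hc'' : c' = Function.update c (k + 2) (c (k + 2) + 1) := rfl
  have hup : ∀ j, j ≠ k + 2 → c' j = c j := by
    intro j hj; rw [hc'']; exact Function.update_of_ne hj _ _
  have hupeq : c' (k + 2) = c (k + 2) + 1 := by rw [hc'']; simp
  have hsub : ({k+1, k+2, k+3} : Finset ℕ) ⊆ Finset.Icc 1 N := by
    intro j hj; simp only [Finset.mem_insert, Finset.mem_singleton] at hj
    rw [Finset.mem_Icc]; omega
  have hsplit : ∀ d : ℕ → ℤ, totalCost N d =
      (∑ j ∈ Finset.Icc 1 N \ {k+1, k+2, k+3},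
        regionCost (d (j - 1)) (d (j + 1)) (d j))
      + (regionCost (d k) (d (k+2)) (d (k+1))
        + regionCost (d (k+1)) (d (k+3)) (d (k+2))
        + regionCost (d (k+2)) (d (k+4)) (d (k+3))) := by
    intro d
    rw [totalCost, ← Finset.sum_sdiff hsub]
    congr 1
    rw [show ({k+1, k+2, k+3} : Finset ℕ) = insert (k+1) (insert (k+2) {k+3}) from rfl,
      Finset.sum_insert (by simp), Finset.sum_insert (by simp),
      Finset.sum_singleton]
    simp only [show k+1-1=k from rfl, show k+2-1=k+1 from rfl, show k+3-1=k+2 from rfl]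
    ring
  rw [hsplit c', hsplit c] at h2
  have hrest : (∑ j ∈ Finset.Icc 1 N \ {k+1, k+2, k+3},
        regionCost (c' (j - 1)) (c' (j + 1)) (c' j))
      = ∑ j ∈ Finset.Icc 1 N \ {k+1, k+2, k+3},
        regionCost (c (j - 1)) (c (j + 1)) (c j) := by
    apply Finset.sum_congr rfl
    intro j hj
    simp only [Finset.mem_sdiff, Finset.mem_Icc, Finset.mem_insert, Finset.mem_singleton] at hj
    rw [hup (j-1) (by omega), hup (j+1) (by omega), hup j (by omega)]
  rw [hrest] at h2
  have e0 : c' k = c k := hup k (by omega)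
  have e1 : c' (k+1) = c (k+1) := hup _ (by omega)
  have e3 : c' (k+3) = c (k+3) := hup _ (by omega)
  have e4 : c' (k+4) = c (k+4) := hup _ (by omega)
  rw [e0, e1, hupeq, e3, e4] at h2
  have key := lt_of_add_lt_add_left h2
  -- integer facts
  have h0k : ∀ j, j ≤ N + 1 → 0 ≤ c j := by
    intro j
    induction j with
    | zero => intro _; omega
    | succ n ih =>
      intro hn
      have := hmono n (by omega)
      have := ih (by omega)
      omega
  have hp : 0 ≤ c k := h0k k (by omega)
  have ha : c k < c (k+1) := hmono k (by omega)
  have hb : c (k+1) < c (k+2) := hmono (k+1) (by omega)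
  have hd : c (k+2) + 1 < c (k+3) := hgap1
  have he : c (k+3) < c (k+4) := hmono (k+3) (by omega)
  by_contra hcon
  push_neg at hcon
  -- cast everything to ℚ
  simp only [regionCost] at key
  push_cast at key
  have hpq : (0:ℚ) ≤ (c k : ℚ) := by exact_mod_cast hp
  have haq : (c k : ℚ) < (c (k+1) : ℚ) := by exact_mod_cast ha
  have hbq : (c (k+1) : ℚ) < (c (k+2) : ℚ) := by exact_mod_cast hb
  have hdq : (c (k+2) : ℚ) + 1 < (c (k+3) : ℚ) := by exact_mod_cast hd
  have heq : (c (k+3) : ℚ) < (c (k+4) : ℚ) := by exact_mod_cast he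
  have hconq : (c (k+4) : ℚ) ≤ 2 * (c (k+2) : ℚ) - (c (k+1) : ℚ) + 1 := by exact_mod_cast hcon
  nlinarith [mul_pos (by linarith : (0:ℚ) < (c (k+1) : ℚ)) (by linarith : (0:ℚ) < (c (k+1) : ℚ) - (c k : ℚ)),
    mul_nonneg (by linarith : (0:ℚ) ≤ (c (k+3) : ℚ)) (by linarith : (0:ℚ) ≤ 2*(c (k+2):ℚ) - (c (k+1):ℚ) - (c (k+4):ℚ) + 1)]
end

section
/- Let h_i, v_i, h_j, v_j, h_k, v_k be positive integers with h_i < v_i < h_j < v_j < h_k < v_k. Then C(h_i, v_j, v_i) + C(v_i, h_j, v_j) + C(h_j, v_k, v_j) + C(v_j, h_k, v_k) > C(h_i, h_j, v_i) + C(v_i, v_j, h_j) + C(h_j, h_k, v_j) + C(v_j, v_k, h_k). (That is, swapping the non-interleaved pair h_j, v_j between the two axes strictly decreases the total cache-placement cost, so an optimal in-axes cache placement is interleaved.) -/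
theorem stmt_8 (hi vi hj vj hk vk : ℤ)
    (hpos : 0 < hi)
    (h1 : hi < vi) (h2 : vi < hj) (h3 : hj < vj) (h4 : vj < hk) (h5 : hk < vk) :
    regionCost hi vj vi + regionCost vi hj vj + regionCost hj vk vj +
        regionCost vj hk vk >
      regionCost hi hj vi + regionCost vi vj hj + regionCost hj hk vj +
        regionCost vj vk hk := by
  unfold regionCost
  have hpos' : (0:ℚ) < hi := by exact_mod_cast hpos
  have q1 : (hi:ℚ) < vi := by exact_mod_cast h1
  have q2 : (vi:ℚ) < hj := by exact_mod_cast h2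
  have q3 : (hj:ℚ) < vj := by exact_mod_cast h3
  have q4 : (vj:ℚ) < hk := by exact_mod_cast h4
  have q5 : (hk:ℚ) < vk := by exact_mod_cast h5
  nlinarith [mul_pos (mul_pos (show (0:ℚ) < vj by linarith) (show (0:ℚ) < (vj:ℚ)-hj by linarith)) (show (0:ℚ) < (vk:ℚ)-hk by linarith),
    mul_pos (mul_pos (show (0:ℚ) < vi by linarith) (show (0:ℚ) < (vj:ℚ)-hj by linarith)) (show (0:ℚ) < (vi:ℚ)-hi by linarith)]
end
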